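/- Let G be a k-geodetic digraph, φ an automorphism of G, and u, v vertices fixed by φ. If P is a directed path of length at most k from u to v, then every vertex of P is fixed by φ. -/

import Mathlib

/-- `IsWalk A w` means the nonempty list `w` of vertices is a directed walk
in the digraph with adjacency relation `A`. -/
def IsWalk {V : Type*} (A : V → V → Prop) : List V → Prop
  | [] => False
  | [_] => True
  | a :: b :: l => A a b ∧ IsWalk A (b :: l)

/-- `WalkFrom A u v w` means `w` is a directed walk from `u` to `v`.
A walk represented by a list of length `n+1` has length `n` as a walk. -/
def WalkFrom {V : Type*} (A : V → V → Prop) (u v : V) (w : List V) : Prop :=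
  IsWalk A w ∧ w.head? = some u ∧ w.getLast? = some v

/-- A digraph is `k`-geodetic if for any (not necessarily distinct) vertices
`u, v` there is at most one directed walk from `u` to `v` of length `≤ k`. -/
def KGeodetic {V : Type*} (A : V → V → Prop) (k : ℕ) : Prop :=
  ∀ u v : V, ∀ w₁ w₂ : List V, WalkFrom A u v w₁ → WalkFrom A u v w₂ →
    w₁.length ≤ k + 1 → w₂.length ≤ k + 1 → w₁ = w₂

/-- `ReachIn A k u v` means there is a directed walk from `u` to `v` of
length at most `k`. -/
def ReachIn {V : Type*} (A : V → V → Prop) (k : ℕ) (u v : V) : Prop :=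
  ∃ w : List V, WalkFrom A u v w ∧ w.length ≤ k + 1

/-- The directed Moore bound `M(d,k) = 1 + d + d^2 + ... + d^k`. -/
def mooreBound (d k : ℕ) : ℕ := ∑ i ∈ Finset.range (k + 1), d ^ i

/-- `o` is the outlier function of a `k`-geodetic digraph with excess one:
for each vertex `u`, `o u` is the unique vertex not reachable from `u` by a
walk of length at most `k`. -/
def IsOutlierFn {V : Type*} (A : V → V → Prop) (k : ℕ) (o : V → V) : Prop :=
  ∀ u v : V, ¬ ReachIn A k u v ↔ v = o u

/-! An automorphism fixing `u` and `v` maps a `≤ k`-walk from `u` to `v` to another such walk,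
so by `k`-geodecity it maps the walk to itself, i.e. fixes it vertex by vertex. -/

theorem IsWalk.map {V W : Type*} {A : V → V → Prop} {B : W → W → Prop} (f : V → W)
    (hf : ∀ a b, A a b → B (f a) (f b)) : ∀ {w : List V}, IsWalk A w → IsWalk B (w.map f)
  | [_], _ => trivial
  | _ :: _ :: _, h => ⟨hf _ _ h.1, IsWalk.map f hf h.2⟩

theorem WalkFrom.map {V W : Type*} {A : V → V → Prop} {B : W → W → Prop} (f : V → W)
    (hf : ∀ a b, A a b → B (f a) (f b)) {u v : V} {w : List V} (hw : WalkFrom A u v w) :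
    WalkFrom B (f u) (f v) (w.map f) := by
  obtain ⟨hwalk, hhead, hlast⟩ := hw
  exact ⟨hwalk.map f hf, by rw [List.head?_map, hhead, Option.map_some],
    by rw [List.getLast?_map, hlast, Option.map_some]⟩

/-- In a `k`-geodetic digraph, if an automorphism `φ` fixes the endpoints of a
directed path `P` of length at most `k`, then `φ` fixes every vertex of `P`. -/
theorem stmt_13 {V : Type*} (A : V → V → Prop) (k : ℕ) (hgeo : KGeodetic A k)
    (φ : V ≃ V) (hφ : ∀ a b : V, A a b ↔ A (φ a) (φ b))
    (u v : V) (hu : φ u = u) (hv : φ v = v)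
    (P : List V) (hP : WalkFrom A u v P) (hlen : P.length ≤ k + 1) :
    ∀ x ∈ P, φ x = x := by
  have hφP : WalkFrom A u v (P.map φ) := by
    simpa only [hu, hv] using hP.map φ fun a b => (hφ a b).1
  have hfix : P.map φ = P.map id := by
    rw [List.map_id]
    exact hgeo u v _ _ hφP hP (by rwa [List.length_map]) hlen
  exact List.map_eq_map_iff.1 hfix
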